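/- For abelian groups A and B, there is a natural isomorphism Γ(A ⊕ B) ≅ Γ(A) ⊕ (A ⊗ B) ⊕ Γ(B), where the middle summand is embedded via the cross-effect (a, b) ↦ [ι₁(a), ι₂(b)] = γ(ι₁(a) + ι₂(b)) − γ(ι₁(a)) − γ(ι₂(b)). -/

import Mathlib

open TensorProduct

universe u v

/-- A function between abelian groups is quadratic: it is even and its cross effect
`(a, b) ↦ f (a + b) - f a - f b` is bilinear. -/
def IsQuadratic {A B : Type*} [AddCommGroup A] [AddCommGroup B] (f : A → B) : Prop :=
  (∀ a, f (-a) = f a) ∧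
  ∃ bil : A →+ A →+ B, ∀ a b, f (a + b) - f a - f b = bil a b

/-- `γ : A → Γ` is a universal quadratic map: it is quadratic and every quadratic map
out of `A` factors uniquely through `γ` by a group homomorphism. -/
def IsUniversalQuadratic {A : Type u} {Γ : Type v} [AddCommGroup A] [AddCommGroup Γ]
    (γ : A → Γ) : Prop :=
  IsQuadratic γ ∧
  ∀ (B : Type max u v) [AddCommGroup B] (f : A → B), IsQuadratic f →
    ∃! F : Γ →+ B, ∀ a, F (γ a) = f a

/-!
The quadratic map `(a, b) ↦ (γ a, a ⊗ b, γ b)` induces `Γ(A ⊕ B) → Γ(A) ⊕ (A ⊗ B) ⊕ Γ(B)`.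
In the other direction, `Γ(ι₁)`, `Γ(ι₂)` and the cross effect `a ⊗ b ↦ [ι₁ a, ι₂ b]`, which is
bilinear, assemble to a homomorphism `Γ(A) ⊕ (A ⊗ B) ⊕ Γ(B) → Γ(A ⊕ B)`. The two composites are
identities because homomorphisms out of `Γ` are determined on the generators `γ x`, and
`γ(a, b) = γ(a, 0) + [ι₁ a, ι₂ b] + γ(0, b)`.
-/

section CrossEffect

variable {A B C : Type*} [AddCommGroup A] [AddCommGroup B] [AddCommGroup C]

def crossEffect (f : A → B) (a a' : A) : B := f (a + a') - f a - f a'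

lemma crossEffect_comm (f : A → B) (a a' : A) : crossEffect f a a' = crossEffect f a' a := by
  simp only [crossEffect, add_comm a a', sub_right_comm]

lemma crossEffect_comp_addMonoidHom (f : A → B) (g : C →+ A) (c c' : C) :
    crossEffect (f ∘ g) c c' = crossEffect f (g c) (g c') := by
  simp only [crossEffect, Function.comp_apply, map_add]

lemma crossEffect_addMonoidHom_comp (F : B →+ C) (f : A → B) (a a' : A) :
    crossEffect (F ∘ f) a a' = F (crossEffect f a a') := by
  simp only [crossEffect, Function.comp_apply, map_sub]

end CrossEffect

namespace IsQuadratic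

variable {A B C : Type*} [AddCommGroup A] [AddCommGroup B] [AddCommGroup C] {f : A → B}

lemma of_crossEffect_add_left (heven : ∀ a, f (-a) = f a)
    (hadd : ∀ a a' a'', crossEffect f (a + a') a'' = crossEffect f a a'' + crossEffect f a' a'') :
    IsQuadratic f :=
  ⟨heven, AddMonoidHom.mk' (fun a => AddMonoidHom.mk' (crossEffect f a) fun a' a'' => by
      simp only [crossEffect_comm f a, hadd]) (fun a a' => by ext; exact hadd ..),
    fun _ _ => rfl⟩

lemma crossEffect_add_left (hf : IsQuadratic f) (a a' a'' : A) :
    crossEffect f (a + a') a'' = crossEffect f a a'' + crossEffect f a' a'' := by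
  obtain ⟨-, bil, hbil⟩ := hf
  simp only [crossEffect, hbil, map_add, AddMonoidHom.add_apply]

lemma map_zero (hf : IsQuadratic f) : f 0 = 0 := by
  have h := hf.crossEffect_add_left 0 0 0
  simpa [crossEffect] using h

lemma comp_addMonoidHom (hf : IsQuadratic f) (g : C →+ A) : IsQuadratic (f ∘ g) :=
  of_crossEffect_add_left (fun c => by simp only [Function.comp_apply, map_neg, hf.1])
    fun c c' c'' => by
      simp only [crossEffect_comp_addMonoidHom, map_add, hf.crossEffect_add_left]

lemma addMonoidHom_comp (hf : IsQuadratic f) (F : B →+ C) : IsQuadratic (F ∘ f) :=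
  of_crossEffect_add_left (fun a => by simp only [Function.comp_apply, hf.1])
    fun a a' a'' => by
      simp only [crossEffect_addMonoidHom_comp, hf.crossEffect_add_left, map_add]

lemma prodMk {g : A → C} (hf : IsQuadratic f) (hg : IsQuadratic g) :
    IsQuadratic fun a => (f a, g a) :=
  of_crossEffect_add_left (fun a => by simp only [hf.1, hg.1])
    fun a a' a'' => Prod.ext (hf.crossEffect_add_left a a' a'') (hg.crossEffect_add_left a a' a'')

end IsQuadratic

lemma isQuadratic_tmul {R A B : Type*} [CommRing R] [AddCommGroup A] [AddCommGroup B]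
    [Module R A] [Module R B] : IsQuadratic fun p : A × B => p.1 ⊗ₜ[R] p.2 :=
  IsQuadratic.of_crossEffect_add_left
    (fun p => by simp only [Prod.fst_neg, Prod.snd_neg, neg_tmul, tmul_neg, neg_neg])
    fun p q r => by
      simp only [crossEffect, Prod.fst_add, Prod.snd_add, add_tmul, tmul_add]
      abel

namespace IsQuadratic

variable {A B C : Type*} [AddCommGroup A] [AddCommGroup B] [AddCommGroup C] {f : A × B → C}

noncomputable def tensorCrossEffect (hf : IsQuadratic f) : A ⊗[ℤ] B →+ C :=
  liftAddHom (AddMonoidHom.compl₂ (hf.2.choose.comp (AddMonoidHom.inl A B)) (AddMonoidHom.inr A B))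
    fun n a b => by simp only [AddMonoidHom.compl₂_apply, AddMonoidHom.coe_comp,
      Function.comp_apply, map_zsmul, AddMonoidHom.zsmul_apply]

lemma tensorCrossEffect_tmul (hf : IsQuadratic f) (a : A) (b : B) :
    hf.tensorCrossEffect (a ⊗ₜ b) = crossEffect f (a, 0) (0, b) :=
  (hf.2.choose_spec _ _).symm

end IsQuadratic

namespace IsUniversalQuadratic

variable {A : Type u} {Γ : Type v} {C : Type max u v} [AddCommGroup A] [AddCommGroup Γ]
  [AddCommGroup C] {γ : A → Γ}

noncomputable def lift (hγ : IsUniversalQuadratic γ) {f : A → C} (hf : IsQuadratic f) : Γ →+ C :=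
  (hγ.2 C f hf).exists.choose

lemma lift_apply (hγ : IsUniversalQuadratic γ) {f : A → C} (hf : IsQuadratic f) (a : A) :
    hγ.lift hf (γ a) = f a :=
  (hγ.2 C f hf).exists.choose_spec a

lemma hom_ext (hγ : IsUniversalQuadratic γ) {F₁ F₂ : Γ →+ C}
    (h : ∀ a, F₁ (γ a) = F₂ (γ a)) : F₁ = F₂ :=
  (hγ.2 C _ (hγ.1.addMonoidHom_comp F₁)).unique (fun _ => rfl) fun a => (h a).symm

end IsUniversalQuadratic

section QuadraticTriple

variable {A B ΓA ΓB : Type*} [AddCommGroup A] [AddCommGroup B] {γA : A → ΓA} {γB : B → ΓB}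

def quadraticTriple (γA : A → ΓA) (γB : B → ΓB) (p : A × B) : ΓA × (A ⊗[ℤ] B) × ΓB :=
  (γA p.1, p.1 ⊗ₜ p.2, γB p.2)

lemma IsQuadratic.quadraticTriple [AddCommGroup ΓA] [AddCommGroup ΓB] (hA : IsQuadratic γA)
    (hB : IsQuadratic γB) : IsQuadratic (quadraticTriple γA γB) :=
  (hA.comp_addMonoidHom (AddMonoidHom.fst A B)).prodMk
    (isQuadratic_tmul.prodMk (hB.comp_addMonoidHom (AddMonoidHom.snd A B)))

lemma quadraticTriple_inl [Zero ΓB] (hB : γB 0 = 0) (a : A) :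
    quadraticTriple γA γB (a, 0) = (γA a, 0, 0) := by
  simp [quadraticTriple, hB]

lemma quadraticTriple_inr [Zero ΓA] (hA : γA 0 = 0) (b : B) :
    quadraticTriple γA γB (0, b) = (0, 0, γB b) := by
  simp [quadraticTriple, hA]

lemma crossEffect_quadraticTriple [AddCommGroup ΓA] [AddCommGroup ΓB] (hA : γA 0 = 0)
    (hB : γB 0 = 0) (a : A) (b : B) :
    crossEffect (quadraticTriple γA γB) (a, 0) (0, b) = (0, a ⊗ₜ b, 0) := by
  simp [crossEffect, quadraticTriple, hA, hB]

end QuadraticTriple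

section DirectSum

variable {A B ΓA ΓB ΓAB : Type u} [AddCommGroup A] [AddCommGroup B] [AddCommGroup ΓA]
  [AddCommGroup ΓB] [AddCommGroup ΓAB] {γA : A → ΓA} {γB : B → ΓB} {γAB : A × B → ΓAB}
  (hA : IsUniversalQuadratic γA) (hB : IsUniversalQuadratic γB) (hAB : IsUniversalQuadratic γAB)

noncomputable def toSummands : ΓAB →+ ΓA × (A ⊗[ℤ] B) × ΓB :=
  hAB.lift (hA.1.quadraticTriple hB.1)

noncomputable def ofSummands : ΓA × (A ⊗[ℤ] B) × ΓB →+ ΓAB :=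
  (hA.lift (hAB.1.comp_addMonoidHom (AddMonoidHom.inl A B))).coprod
    (hAB.1.tensorCrossEffect.coprod (hB.lift (hAB.1.comp_addMonoidHom (AddMonoidHom.inr A B))))

lemma toSummands_apply (p : A × B) :
    toSummands hA hB hAB (γAB p) = quadraticTriple γA γB p :=
  hAB.lift_apply _ p

lemma toSummands_crossEffect (a : A) (b : B) :
    toSummands hA hB hAB (crossEffect γAB (a, 0) (0, b)) = (0, a ⊗ₜ b, 0) := by
  rw [crossEffect, map_sub, map_sub, toSummands_apply, toSummands_apply, toSummands_apply]
  exact crossEffect_quadraticTriple hA.1.map_zero hB.1.map_zero a b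

lemma ofSummands_comp_toSummands :
    (ofSummands hA hB hAB).comp (toSummands hA hB hAB) = AddMonoidHom.id ΓAB :=
  hAB.hom_ext fun p => by
    simp [ofSummands, toSummands_apply, quadraticTriple, IsQuadratic.tensorCrossEffect_tmul,
      IsUniversalQuadratic.lift_apply, crossEffect]

lemma toSummands_comp_ofSummands :
    (toSummands hA hB hAB).comp (ofSummands hA hB hAB) = AddMonoidHom.id _ := by
  have hid : AddMonoidHom.id (ΓA × (A ⊗[ℤ] B) × ΓB) = (AddMonoidHom.inl _ _).coprod
      (((AddMonoidHom.inr _ _).comp (AddMonoidHom.inl _ _)).coprod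
        ((AddMonoidHom.inr _ _).comp (AddMonoidHom.inr _ _))) := by
    rw [← AddMonoidHom.comp_coprod, AddMonoidHom.coprod_inl_inr, AddMonoidHom.comp_id,
      AddMonoidHom.coprod_inl_inr]
  rw [hid, ofSummands, AddMonoidHom.comp_coprod, AddMonoidHom.comp_coprod]
  congr 1
  · exact hA.hom_ext fun a => by
      simp [IsUniversalQuadratic.lift_apply, toSummands_apply, quadraticTriple_inl hB.1.map_zero]
  congr 1
  · refine AddMonoidHom.toIntLinearMap_injective (TensorProduct.ext' fun a b => ?_)
    exact (congrArg (toSummands hA hB hAB) (hAB.1.tensorCrossEffect_tmul a b)).trans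
      (toSummands_crossEffect hA hB hAB a b)
  · exact hB.hom_ext fun b => by
      simp [IsUniversalQuadratic.lift_apply, toSummands_apply, quadraticTriple_inr hA.1.map_zero]

end DirectSum

/-- For abelian groups `A` and `B`, there is an isomorphism
`Γ(A ⊕ B) ≅ Γ(A) ⊕ (A ⊗ B) ⊕ Γ(B)`, where `Γ(A)` and `Γ(B)` are embedded via the
two inclusions and the middle summand corresponds to the cross effect
`(a, b) ↦ [ι₁ a, ι₂ b] = γ(ι₁ a + ι₂ b) − γ(ι₁ a) − γ(ι₂ b)`. -/
theorem gamma_of_direct_sum {A B ΓA ΓB ΓAB : Type u}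
    [AddCommGroup A] [AddCommGroup B] [AddCommGroup ΓA] [AddCommGroup ΓB]
    [AddCommGroup ΓAB]
    (γA : A → ΓA) (hA : IsUniversalQuadratic γA)
    (γB : B → ΓB) (hB : IsUniversalQuadratic γB)
    (γAB : A × B → ΓAB) (hAB : IsUniversalQuadratic γAB) :
    ∃ e : ΓAB ≃+ ΓA × (A ⊗[ℤ] B) × ΓB,
      (∀ a : A, e (γAB (a, 0)) = (γA a, 0, 0)) ∧
      (∀ b : B, e (γAB (0, b)) = (0, 0, γB b)) ∧
      (∀ (a : A) (b : B),
        e (γAB ((a, 0) + (0, b)) - γAB (a, 0) - γAB (0, b)) = (0, a ⊗ₜ[ℤ] b, 0)) :=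
  ⟨(toSummands hA hB hAB).toAddEquiv (ofSummands hA hB hAB)
      (ofSummands_comp_toSummands hA hB hAB) (toSummands_comp_ofSummands hA hB hAB),
    fun a => (toSummands_apply hA hB hAB _).trans (quadraticTriple_inl hB.1.map_zero a),
    fun b => (toSummands_apply hA hB hAB _).trans (quadraticTriple_inr hA.1.map_zero b),
    toSummands_crossEffect hA hB hAB⟩
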